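/- (First Cousin Principle) Let φ be an alternating p-form of comass one on a finite-dimensional real inner product space V, and let ξ = (e₁,…,e_p) ∈ G(φ) be a φ-plane. Then for every index k ∈ {1,…,p} and every vector b ∈ V orthogonal to span{e₁,…,e_p}, one has φ(e₁,…,e_{k−1}, b, e_{k+1},…,e_p) = 0. (Lemma 2.4) -/

import Mathlib

/-! Rotating `e k` towards a unit vector `u ⊥ ξ` within the plane `span {e k, u}` keeps `ξ`
orthonormal, and `φ` of the rotated frame is `x + y c` where `(x, y)` is the rotation and
`c = φ(e₁,…,u,…,e_p)`. Comass one bounds this affine function of `(x, y)` by `1` on the unit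
circle, where it attains `√(1 + c²)`; hence `c = 0`. -/

open scoped RealInnerProductSpace

noncomputable section

variable {V : Type*} [NormedAddCommGroup V] [InnerProductSpace ℝ V] [FiniteDimensional ℝ V]

theorem Orthonormal.update {𝕜 E ι : Type*} [RCLike 𝕜] [NormedAddCommGroup E]
    [InnerProductSpace 𝕜 E] [DecidableEq ι] {e : ι → E} (he : Orthonormal 𝕜 e) (k : ι) {v : E}
    (hv : ‖v‖ = 1) (hve : ∀ i, i ≠ k → inner 𝕜 (e i) v = 0) :
    Orthonormal 𝕜 (Function.update e k v) := by
  refine ⟨fun i => ?_, fun i j hij => ?_⟩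
  · rcases eq_or_ne i k with rfl | hik
    · simpa using hv
    · simpa [Function.update_of_ne hik] using he.1 i
  · rcases eq_or_ne i k with rfl | hik
    · simpa [Function.update_of_ne hij.symm] using inner_eq_zero_symm.mp (hve j hij.symm)
    rcases eq_or_ne j k with rfl | hjk
    · simpa [Function.update_of_ne hik] using hve i hij
    · simpa [Function.update_of_ne hik, Function.update_of_ne hjk] using he.2 hij

theorem eq_zero_of_forall_sq_add_sq_eq_one_add_mul_le_one {c : ℝ}
    (h : ∀ x y : ℝ, x ^ 2 + y ^ 2 = 1 → x + y * c ≤ 1) : c = 0 := by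
  set r := √(1 + c ^ 2)
  have hr2 : r ^ 2 = 1 + c ^ 2 := Real.sq_sqrt (by positivity)
  have hr : 0 < r := Real.sqrt_pos.mpr (by positivity)
  have hunit : (1 / r) ^ 2 + (c / r) ^ 2 = 1 := by field_simp; linarith
  have hval : 1 / r + c / r * c = r := by field_simp; linarith
  have hle : r ≤ 1 := hval ▸ h _ _ hunit
  nlinarith

theorem map_update_eq_zero_of_comass_le_one {E : Type*} [NormedAddCommGroup E]
    [InnerProductSpace ℝ E] {p : ℕ} {φ : E [⋀^Fin p]→ₗ[ℝ] ℝ}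
    (hcomass : ∀ e : Fin p → E, Orthonormal ℝ e → φ e ≤ 1)
    {e : Fin p → E} (he : Orthonormal ℝ e) (heφ : φ e = 1)
    (k : Fin p) {u : E} (hu : ‖u‖ = 1) (hue : ∀ i, ⟪e i, u⟫ = 0) :
    φ (Function.update e k u) = 0 := by
  refine eq_zero_of_forall_sq_add_sq_eq_one_add_mul_le_one fun x y hxy => ?_
  have hnorm : ‖x • e k + y • u‖ = 1 := by
    refine (pow_eq_one_iff_of_nonneg (norm_nonneg _) two_ne_zero).mp ?_
    rw [norm_add_sq_real, real_inner_smul_left, real_inner_smul_right, hue k, norm_smul,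
      norm_smul, he.1 k, hu, Real.norm_eq_abs, Real.norm_eq_abs]
    simpa using hxy
  have hperp : ∀ i, i ≠ k → ⟪e i, x • e k + y • u⟫ = 0 := fun i hik => by
    simp [inner_add_right, real_inner_smul_right, he.2 hik, hue i]
  calc x + y * φ (Function.update e k u)
      = φ (Function.update e k (x • e k + y • u)) := by
        rw [φ.map_update_add, φ.map_update_smul, φ.map_update_smul, Function.update_eq_self,
          heφ, smul_eq_mul, smul_eq_mul, mul_one]
    _ ≤ 1 := hcomass _ (he.update k hnorm hperp)

theorem firstCousinPrinciple {p : ℕ}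
    (φ : V [⋀^Fin p]→ₗ[ℝ] ℝ)
    (hcomass : ∀ e : Fin p → V, Orthonormal ℝ e → φ e ≤ 1)
    (e : Fin p → V) (he : Orthonormal ℝ e) (heφ : φ e = 1)
    (k : Fin p) (b : V) (hb : b ∈ (Submodule.span ℝ (Set.range e))ᗮ) :
    φ (Function.update e k b) = 0 := by
  rcases eq_or_ne b 0 with rfl | hb0
  · simp
  set u := ‖b‖⁻¹ • b
  have hue : ∀ i, ⟪e i, u⟫ = 0 := fun i =>
    Submodule.inner_right_of_mem_orthogonal (Submodule.subset_span (Set.mem_range_self i))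
      (Submodule.smul_mem _ _ hb)
  have hu : ‖u‖ = 1 := by simpa using norm_smul_inv_norm (𝕜 := ℝ) hb0
  have hbu : b = ‖b‖ • u := by rw [smul_inv_smul₀ (norm_ne_zero_iff.mpr hb0)]
  rw [hbu, φ.map_update_smul, map_update_eq_zero_of_comass_le_one hcomass he heφ k hu hue,
    smul_zero]
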